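/- Let α ∈ (0,1) and let θ : ℝ² → [0,∞) be integrable with ∫ y'^⊥ θ(y') dy' = 0 and moment of inertia I = ∫|y'|² θ(y') dy' (moments about the origin). Then for any x' with |x'| = R > 0, | ∫_{|y'| ≤ R/2} (x'·y'^⊥)/(|x'| |x'-y'|^{2+α}) θ(y') dy' | ≤ C I / R^{3+α} for a constant C depending only on α. -/

import Mathlib

/-!
Write `K(x, y) = ⟪x, y^⊥⟫ / (|x| |x - y|^{2+α})` and `R = |x|`. The linear part
`⟪x, y^⊥⟫ θ(y) / R^{3+α}` of `K(x, y) θ(y)` (`|x - y|` replaced by `|x|`) has total integral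
zero by the vanishing perpendicular moment, so its integral over `|y| ≤ R/2` equals minus its
integral over `|y| > R/2`, where `R |y| ≤ 2 |y|²` bounds it by `2 I / R^{3+α}`. On `|y| ≤ R/2`
we have `|x - y| ∈ [R/2, 2R]`, and the mean value theorem for `t ↦ t^{-(2+α)}` bounds the
remainder `K(x, y) - ⟪x, y^⊥⟫ / R^{3+α}` by `C |y|² / R^{3+α}`.
-/
open Real Set MeasureTheory

noncomputable def perp (v : EuclideanSpace ℝ (Fin 2)) : EuclideanSpace ℝ (Fin 2) :=
  (WithLp.equiv 2 (Fin 2 → ℝ)).symm ![v 1, -v 0]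

lemma rpow_le_two_rpow_abs {s : ℝ} (p : ℝ) (hs : s ∈ Icc (1/2 : ℝ) 2) : s ^ p ≤ 2 ^ |p| := by
  rcases le_total 0 p with hp | hp
  · rw [abs_of_nonneg hp]
    exact rpow_le_rpow (by linarith [hs.1]) hs.2 hp
  · rw [abs_of_nonpos hp, rpow_neg zero_le_two, ← inv_rpow zero_le_two]
    exact rpow_le_rpow_of_nonpos (by norm_num) (by linarith [hs.1]) hp

lemma rpow_le_two_rpow_abs_mul_rpow {t R : ℝ} (p : ℝ) (hR : 0 < R) (ht : t ∈ Icc (R / 2) (2 * R)) :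
    t ^ p ≤ 2 ^ |p| * R ^ p := by
  have hs : t / R ∈ Icc (1/2 : ℝ) 2 := by
    constructor
    · rw [le_div_iff₀ hR]; linarith [ht.1]
    · rw [div_le_iff₀ hR]; linarith [ht.2]
  calc t ^ p = (t / R) ^ p * R ^ p := by
        rw [div_rpow (by linarith [ht.1]) hR.le, div_mul_cancel₀ _ (rpow_pos_of_pos hR p).ne']
    _ ≤ 2 ^ |p| * R ^ p := by gcongr; exact rpow_le_two_rpow_abs p hs

lemma abs_rpow_sub_rpow_le {a R : ℝ} (p : ℝ) (hR : 0 < R) (ha : a ∈ Icc (R / 2) (2 * R)) :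
    |a ^ p - R ^ p| ≤ |p| * 2 ^ |p - 1| * R ^ (p - 1) * |a - R| := by
  have hRmem : R ∈ Icc (R / 2) (2 * R) := ⟨by linarith, by linarith⟩
  have hpos : ∀ t ∈ Icc (R / 2) (2 * R), 0 < t := fun t ht => by linarith [ht.1]
  refine Convex.norm_image_sub_le_of_norm_hasDerivWithin_le (f := fun t => t ^ p)
    (fun t ht => (hasDerivAt_rpow_const (Or.inl (hpos t ht).ne')).hasDerivWithinAt)
    (fun t ht => ?_) (convex_Icc _ _) hRmem ha
  rw [norm_mul, Real.norm_eq_abs, Real.norm_eq_abs, abs_of_pos (rpow_pos_of_pos (hpos t ht) _),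
    mul_assoc]
  gcongr
  exact rpow_le_two_rpow_abs_mul_rpow _ hR ht

lemma abs_norm_sub_rpow_sub_rpow_le {E : Type*} [SeminormedAddCommGroup E] (p : ℝ) {x y : E}
    (hx : 0 < ‖x‖) (hy : ‖y‖ ≤ ‖x‖ / 2) :
    |‖x - y‖ ^ p - ‖x‖ ^ p| ≤ |p| * 2 ^ |p - 1| * ‖x‖ ^ (p - 1) * ‖y‖ := by
  have hdist : |‖x - y‖ - ‖x‖| ≤ ‖y‖ := by
    simpa using abs_norm_sub_norm_le (x - y) x
  have hmem : ‖x - y‖ ∈ Icc (‖x‖ / 2) (2 * ‖x‖) := by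
    constructor <;> linarith [(abs_le.mp hdist).1, (abs_le.mp hdist).2]
  refine (abs_rpow_sub_rpow_le p hx hmem).trans ?_
  gcongr

lemma norm_perp (y : EuclideanSpace ℝ (Fin 2)) : ‖perp y‖ = ‖y‖ := by
  simp [perp, EuclideanSpace.norm_eq, Fin.sum_univ_two, add_comm]

lemma continuous_perp : Continuous perp := by
  refine (PiLp.continuous_toLp 2 _).comp (continuous_pi fun i => ?_)
  fin_cases i
  · exact (EuclideanSpace.proj (1 : Fin 2)).continuous
  · exact (EuclideanSpace.proj (0 : Fin 2)).continuous.neg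

lemma abs_inner_perp_le (x y : EuclideanSpace ℝ (Fin 2)) : |inner ℝ x (perp y)| ≤ ‖x‖ * ‖y‖ :=
  norm_perp y ▸ abs_real_inner_le_norm x (perp y)

noncomputable def perpKernel (α : ℝ) (x y : EuclideanSpace ℝ (Fin 2)) : ℝ :=
  inner ℝ x (perp y) / (‖x‖ * ‖x - y‖ ^ (2 + α))

lemma measurable_perpKernel (α : ℝ) (x : EuclideanSpace ℝ (Fin 2)) :
    Measurable (perpKernel α x) := by
  unfold perpKernel
  have := continuous_perp.measurable
  fun_prop

lemma abs_perpKernel_sub_le (α : ℝ) {x y : EuclideanSpace ℝ (Fin 2)} (hx : 0 < ‖x‖)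
    (hy : ‖y‖ ≤ ‖x‖ / 2) :
    |perpKernel α x y - inner ℝ x (perp y) / ‖x‖ ^ (3 + α)| ≤
      |2 + α| * 2 ^ |3 + α| * ‖y‖ ^ 2 / ‖x‖ ^ (3 + α) := by
  have hxy : 0 < ‖x - y‖ := by
    have := norm_sub_norm_le x y; linarith
  have hsplit : perpKernel α x y - inner ℝ x (perp y) / ‖x‖ ^ (3 + α) =
      inner ℝ x (perp y) / ‖x‖ * (‖x - y‖ ^ (-(2 + α)) - ‖x‖ ^ (-(2 + α))) := by
    rw [perpKernel, rpow_neg hxy.le, rpow_neg hx.le, show (3 : ℝ) + α = 1 + (2 + α) by ring,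
      rpow_add hx, rpow_one]
    field_simp
  have hmvt := abs_norm_sub_rpow_sub_rpow_le (-(2 + α)) hx hy
  rw [abs_neg, show -(2 + α) - 1 = -(3 + α) by ring, abs_neg, rpow_neg hx.le (3 + α)] at hmvt
  rw [hsplit, abs_mul, abs_div, abs_of_pos hx]
  calc |inner ℝ x (perp y)| / ‖x‖ * |‖x - y‖ ^ (-(2 + α)) - ‖x‖ ^ (-(2 + α))|
      ≤ ‖y‖ * (|2 + α| * 2 ^ |3 + α| * (‖x‖ ^ (3 + α))⁻¹ * ‖y‖) := by
        gcongr
        rw [div_le_iff₀ hx, mul_comm]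
        exact abs_inner_perp_le x y
    _ = |2 + α| * 2 ^ |3 + α| * ‖y‖ ^ 2 / ‖x‖ ^ (3 + α) := by ring

lemma integrable_norm_mul {E : Type*} [NormedAddCommGroup E] [MeasurableSpace E]
    [OpensMeasurableSpace E] {μ : Measure E} {f : E → ℝ} (hf : Integrable f μ)
    (hf2 : Integrable (fun y => ‖y‖ ^ 2 * f y) μ) : Integrable (fun y => ‖y‖ * f y) μ := by
  refine (hf.norm.add hf2.norm).mono' (continuous_norm.aestronglyMeasurable.mul hf.1)
    (ae_of_all _ fun y => ?_)
  have : ‖y‖ ≤ 1 + ‖y‖ ^ 2 := by nlinarith [sq_nonneg (‖y‖ - 1)]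
  simp only [Pi.add_apply, norm_mul, norm_pow, norm_norm]
  nlinarith [norm_nonneg (f y)]

section Integrals

variable {θ : EuclideanSpace ℝ (Fin 2) → ℝ}

lemma integrable_smul_perp (hθ : Integrable θ) (hθ2 : Integrable (fun y => ‖y‖ ^ 2 * θ y)) :
    Integrable (fun y => θ y • perp y) := by
  refine (integrable_norm_mul hθ hθ2).norm.mono' (hθ.1.smul continuous_perp.aestronglyMeasurable)
    (ae_of_all _ fun y => ?_)
  rw [norm_smul, norm_perp, norm_mul, norm_norm, mul_comm]

lemma inner_perp_mul_eq_inner_smul (x y : EuclideanSpace ℝ (Fin 2)) (t : ℝ) :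
    inner ℝ x (perp y) * t = inner ℝ x (t • perp y) := by
  rw [real_inner_smul_right, mul_comm]

lemma integrable_inner_perp_mul (hv : Integrable (fun y => θ y • perp y))
    (x : EuclideanSpace ℝ (Fin 2)) : Integrable (fun y => inner ℝ x (perp y) * θ y) := by
  simpa only [inner_perp_mul_eq_inner_smul] using hv.const_inner x

lemma abs_setIntegral_inner_perp_mul_le (hθ0 : ∀ y, 0 ≤ θ y)
    (hv : Integrable (fun y => θ y • perp y)) (hθ2 : Integrable (fun y => ‖y‖ ^ 2 * θ y))
    (hmom : ∫ y, θ y • perp y = 0) (x : EuclideanSpace ℝ (Fin 2)) {r : ℝ} (hr : 0 < r) :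
    |∫ y in {y | ‖y‖ ≤ r}, inner ℝ x (perp y) * θ y| ≤ ‖x‖ / r * ∫ y, ‖y‖ ^ 2 * θ y := by
  set S : Set (EuclideanSpace ℝ (Fin 2)) := {y | ‖y‖ ≤ r}
  have hS : MeasurableSet S := measurableSet_le measurable_norm measurable_const
  have hg := integrable_inner_perp_mul hv x
  have hg0 : ∫ y, inner ℝ x (perp y) * θ y = 0 := by
    simp only [inner_perp_mul_eq_inner_smul, integral_inner hv, hmom, inner_zero_right]
  have hfar : ∀ y ∈ Sᶜ, ‖inner ℝ x (perp y) * θ y‖ ≤ ‖x‖ / r * (‖y‖ ^ 2 * θ y) := by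
    intro y hy
    have hry : r < ‖y‖ := lt_of_not_ge hy
    rw [norm_mul, Real.norm_eq_abs, Real.norm_eq_abs, abs_of_nonneg (hθ0 y), div_mul_eq_mul_div,
      le_div_iff₀ hr]
    calc |inner ℝ x (perp y)| * θ y * r ≤ ‖x‖ * ‖y‖ * θ y * ‖y‖ := by
          have := hθ0 y
          gcongr
          exact abs_inner_perp_le x y
      _ = ‖x‖ * (‖y‖ ^ 2 * θ y) := by ring
  have hcompl : ∫ y in S, inner ℝ x (perp y) * θ y = -∫ y in Sᶜ, inner ℝ x (perp y) * θ y := by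
    rw [setIntegral_compl hS hg, hg0, zero_sub, neg_neg]
  rw [hcompl, abs_neg, ← Real.norm_eq_abs, ← integral_const_mul]
  calc ‖∫ y in Sᶜ, inner ℝ x (perp y) * θ y‖ ≤ ∫ y in Sᶜ, ‖x‖ / r * (‖y‖ ^ 2 * θ y) :=
        norm_integral_le_of_norm_le (hθ2.const_mul _).integrableOn
          (ae_restrict_of_forall_mem hS.compl hfar)
    _ ≤ ∫ y, ‖x‖ / r * (‖y‖ ^ 2 * θ y) :=
        setIntegral_le_integral (hθ2.const_mul _)
          (ae_of_all _ fun y => by have := hθ0 y; positivity)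

lemma norm_perpKernel_sub_mul_le (α : ℝ) (hθ0 : ∀ y, 0 ≤ θ y) {x y : EuclideanSpace ℝ (Fin 2)}
    (hx : 0 < ‖x‖) (hy : ‖y‖ ≤ ‖x‖ / 2) :
    ‖perpKernel α x y * θ y - inner ℝ x (perp y) * θ y / ‖x‖ ^ (3 + α)‖ ≤
      |2 + α| * 2 ^ |3 + α| / ‖x‖ ^ (3 + α) * (‖y‖ ^ 2 * θ y) := by
  rw [mul_div_right_comm, ← sub_mul, norm_mul, Real.norm_eq_abs, Real.norm_eq_abs,
    abs_of_nonneg (hθ0 y), ← mul_assoc, ← mul_div_right_comm]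
  exact mul_le_mul_of_nonneg_right (abs_perpKernel_sub_le α hx hy) (hθ0 y)

lemma integrableOn_perpKernel_sub_mul (α : ℝ) (hθ : AEStronglyMeasurable θ) (hθ0 : ∀ y, 0 ≤ θ y)
    (hθ2 : Integrable (fun y => ‖y‖ ^ 2 * θ y)) {x : EuclideanSpace ℝ (Fin 2)} (hx : 0 < ‖x‖) :
    IntegrableOn (fun y => perpKernel α x y * θ y - inner ℝ x (perp y) * θ y / ‖x‖ ^ (3 + α))
      {y | ‖y‖ ≤ ‖x‖ / 2} := by
  have hmeas : AEStronglyMeasurable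
      (fun y => perpKernel α x y * θ y - inner ℝ x (perp y) * θ y / ‖x‖ ^ (3 + α)) := by
    have := measurable_perpKernel α x
    have := continuous_perp.measurable
    fun_prop
  exact (hθ2.const_mul _).integrableOn.mono' hmeas.restrict
    (ae_restrict_of_forall_mem (measurableSet_le measurable_norm measurable_const)
      fun y hy => norm_perpKernel_sub_mul_le α hθ0 hx hy)

lemma abs_setIntegral_perpKernel_sub_mul_le (α : ℝ) (hθ0 : ∀ y, 0 ≤ θ y)
    (hθ2 : Integrable (fun y => ‖y‖ ^ 2 * θ y)) {x : EuclideanSpace ℝ (Fin 2)} (hx : 0 < ‖x‖) :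
    |∫ y in {y | ‖y‖ ≤ ‖x‖ / 2},
        (perpKernel α x y * θ y - inner ℝ x (perp y) * θ y / ‖x‖ ^ (3 + α))| ≤
      |2 + α| * 2 ^ |3 + α| / ‖x‖ ^ (3 + α) * ∫ y, ‖y‖ ^ 2 * θ y := by
  have hS : MeasurableSet {y : EuclideanSpace ℝ (Fin 2) | ‖y‖ ≤ ‖x‖ / 2} :=
    measurableSet_le measurable_norm measurable_const
  rw [← Real.norm_eq_abs, ← integral_const_mul]
  calc _ ≤ ∫ y in {y | ‖y‖ ≤ ‖x‖ / 2}, |2 + α| * 2 ^ |3 + α| / ‖x‖ ^ (3 + α) * (‖y‖ ^ 2 * θ y) :=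
        norm_integral_le_of_norm_le (hθ2.const_mul _).integrableOn
          (ae_restrict_of_forall_mem hS fun y hy => norm_perpKernel_sub_mul_le α hθ0 hx hy)
    _ ≤ ∫ y, |2 + α| * 2 ^ |3 + α| / ‖x‖ ^ (3 + α) * (‖y‖ ^ 2 * θ y) :=
        setIntegral_le_integral (hθ2.const_mul _)
          (ae_of_all _ fun y => by have := hθ0 y; positivity)

end Integrals

theorem stmt17_general (α : ℝ) :
    ∃ C > 0, ∀ θ : EuclideanSpace ℝ (Fin 2) → ℝ, Integrable θ → (∀ y, 0 ≤ θ y) →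
      (∫ y, θ y • perp y) = 0 →
      ∀ I : ℝ, I = (∫ y, ‖y‖ ^ 2 * θ y) → Integrable (fun y => ‖y‖ ^ 2 * θ y) →
      ∀ (x : EuclideanSpace ℝ (Fin 2)) (R : ℝ), 0 < R → ‖x‖ = R →
        abs (∫ y in {y : EuclideanSpace ℝ (Fin 2) | ‖y‖ ≤ R / 2},
            (inner ℝ x (perp y) : ℝ) / (‖x‖ * ‖x - y‖ ^ (2 + α)) * θ y) ≤
          C * I / R ^ (3 + α) := by
  refine ⟨|2 + α| * 2 ^ |3 + α| + 2, by positivity, ?_⟩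
  rintro θ hθ hθ0 hmom I rfl hθ2 x R hR rfl
  set S := {y : EuclideanSpace ℝ (Fin 2) | ‖y‖ ≤ ‖x‖ / 2}
  have hc : 0 < ‖x‖ ^ (3 + α) := rpow_pos_of_pos hR _
  have hv := integrable_smul_perp hθ hθ2
  have hsplit : ∫ y in S, perpKernel α x y * θ y =
      (∫ y in S, (perpKernel α x y * θ y - inner ℝ x (perp y) * θ y / ‖x‖ ^ (3 + α))) +
        (∫ y in S, inner ℝ x (perp y) * θ y) / ‖x‖ ^ (3 + α) := by
    rw [← integral_div, ← integral_add (integrableOn_perpKernel_sub_mul α hθ.1 hθ0 hθ2 hR)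
      ((integrable_inner_perp_mul hv x).integrableOn.div_const _)]
    simp only [S, sub_add_cancel]
  have hnear := abs_setIntegral_perpKernel_sub_mul_le α hθ0 hθ2 hR
  have hfar := abs_setIntegral_inner_perp_mul_le hθ0 hv hθ2 hmom x (half_pos hR)
  rw [div_div_cancel₀ hR.ne'] at hfar
  change |∫ y in S, perpKernel α x y * θ y| ≤ _
  rw [hsplit]
  calc _ ≤ |∫ y in S, (perpKernel α x y * θ y - inner ℝ x (perp y) * θ y / ‖x‖ ^ (3 + α))| +
        |∫ y in S, inner ℝ x (perp y) * θ y| / ‖x‖ ^ (3 + α) :=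
        (abs_add_le _ _).trans_eq (by rw [abs_div, abs_of_pos hc])
    _ ≤ |2 + α| * 2 ^ |3 + α| / ‖x‖ ^ (3 + α) * (∫ y, ‖y‖ ^ 2 * θ y) +
        2 * (∫ y, ‖y‖ ^ 2 * θ y) / ‖x‖ ^ (3 + α) :=
        add_le_add hnear (div_le_div_of_nonneg_right hfar hc.le)
    _ = _ := by ring

/-- Combined estimate of `H₁'` and `H₁''` in Lemma 2.2: if `θ ≥ 0` has vanishing first
perpendicular moment and moment of inertia `I` about the origin, then for `|x'| = R > 0`,
`|∫_{|y'|≤R/2} (x'·y'^⊥)/(|x'| |x'-y'|^{2+α}) θ(y') dy'| ≤ C I / R^{3+α}` with `C = C(α)`. -/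
theorem stmt17 (α : ℝ) (hα : α ∈ Ioo (0:ℝ) 1) :
    ∃ C > 0, ∀ θ : EuclideanSpace ℝ (Fin 2) → ℝ, Integrable θ → (∀ y, 0 ≤ θ y) →
      (∫ y, θ y • perp y) = 0 →
      ∀ I : ℝ, I = (∫ y, ‖y‖ ^ 2 * θ y) → Integrable (fun y => ‖y‖ ^ 2 * θ y) →
      ∀ (x : EuclideanSpace ℝ (Fin 2)) (R : ℝ), 0 < R → ‖x‖ = R →
        abs (∫ y in {y : EuclideanSpace ℝ (Fin 2) | ‖y‖ ≤ R / 2},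
            (inner ℝ x (perp y) : ℝ) / (‖x‖ * ‖x - y‖ ^ (2 + α)) * θ y) ≤
          C * I / R ^ (3 + α) :=
  stmt17_general α
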